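/- If L is a countable normal (bounded, distributive, separative) lattice, then its Wallman space wL is a compact metrizable space. -/

import Mathlib

open Set TopologicalSpace FirstOrder

universe u v

/-- An ultrafilter on an abstract bounded lattice `L` (in the Wallman sense). -/
structure LatUltra (L : Type u) [Lattice L] [BoundedOrder L] where
  sets : Set L
  top_mem : ⊤ ∈ sets
  bot_notMem : ⊥ ∉ sets
  inf_mem : ∀ a ∈ sets, ∀ b ∈ sets, a ⊓ b ∈ sets
  superset_mem : ∀ a ∈ sets, ∀ b : L, a ≤ b → b ∈ sets
  ultra : ∀ a : L, a ∉ sets → ∃ b ∈ sets, a ⊓ b = ⊥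

/-- The Wallman topology on the space of lattice ultrafilters: the sets `â = {u : a ∈ u}`
form a base for closed sets. -/
instance LatUltra.instTopologicalSpace (L : Type u) [Lattice L] [BoundedOrder L] :
    TopologicalSpace (LatUltra L) :=
  TopologicalSpace.generateFrom {s | ∃ a : L, s = {u : LatUltra L | a ∈ u.sets}ᶜ}

/-- A lattice is normal. -/
def LatNormal (L : Type u) [Lattice L] [BoundedOrder L] : Prop :=
  ∀ a b : L, a ⊓ b = ⊥ → ∃ c d : L, c ⊔ d = ⊤ ∧ c ⊓ a = ⊥ ∧ d ⊓ b = ⊥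

/-- A lattice is separative: whenever `a ≰ b` there is `c` with `c ⊓ a ≠ ⊥` and `c ⊓ b = ⊥`. -/
def LatSeparative (L : Type u) [Lattice L] [BoundedOrder L] : Prop :=
  ∀ a b : L, ¬ a ≤ b → ∃ c : L, c ⊓ a ≠ ⊥ ∧ c ⊓ b = ⊥

/-!
Every proper filter of `L` extends to an ultrafilter, which makes `wL` compact for any bounded
lattice. For `a ∈ u \ v` pick `b ∈ v` with `a ⊓ b = ⊥`; normality gives `c ⊔ d = ⊤` with
`c ⊓ a = ⊥ = d ⊓ b`, so `ĉᶜ ∋ u` and `d̂ᶜ ∋ v` are open, and they are disjoint because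
ultrafilters of a distributive lattice are prime. The countably many sets `âᶜ` generate the
topology, so `wL` is a second-countable compact Hausdorff space, hence metrizable.
-/

open Order OrderDual Topology

namespace LatUltra

variable {L : Type u}

section Lattice

variable [Lattice L] [BoundedOrder L]

theorem sets_injective : Function.Injective (sets : LatUltra L → Set L) := by
  rintro ⟨⟩ ⟨⟩ rfl
  rfl

theorem inf_mem_iff (u : LatUltra L) {a b : L} : a ⊓ b ∈ u.sets ↔ a ∈ u.sets ∧ b ∈ u.sets :=
  ⟨fun h => ⟨u.superset_mem _ h a inf_le_left, u.superset_mem _ h b inf_le_right⟩,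
    fun h => u.inf_mem a h.1 b h.2⟩

theorem isOpen_compl_setOf_mem (a : L) : IsOpen {u : LatUltra L | a ∈ u.sets}ᶜ :=
  GenerateOpen.basic _ ⟨a, rfl⟩

/-- Filters of `L` are encoded as ideals of `Lᵒᵈ`. -/
def ofMaximal (J : Ideal Lᵒᵈ) [J.IsMaximal] : LatUltra L where
  sets := {a | toDual a ∈ J}
  top_mem := J.bot_mem
  bot_notMem := Ideal.IsProper.top_notMem inferInstance
  inf_mem _ ha _ hb := J.sup_mem ha hb
  superset_mem _ ha _ hab := J.lower hab ha
  ultra a ha := by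
    have hbot : toDual (⊥ : L) ∈ J ⊔ Ideal.principal (toDual a) := by
      rw [← SetLike.mem_coe, Ideal.IsMaximal.maximal_proper (Ideal.lt_sup_principal_of_notMem ha)]
      exact mem_univ _
    obtain ⟨b, hb, c, hca, hbc⟩ := Ideal.mem_sup.1 hbot
    refine ⟨ofDual b, hb, le_bot_iff.1 ?_⟩
    calc a ⊓ ofDual b ≤ ofDual c ⊓ ofDual b := inf_le_inf_right _ hca
      _ ≤ ⊥ := by rw [inf_comm]; exact hbc

theorem exists_superset_of_isPFilter {F : Set L} (hF : IsPFilter F) (hbot : ⊥ ∉ F) :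
    ∃ u : LatUltra L, F ⊆ u.sets := by
  have : hF.toIdeal.IsProper := Ideal.isProper_of_notMem (p := toDual ⊥) hbot
  obtain ⟨J, hFJ, hJ⟩ := this.exists_le_maximal
  exact ⟨ofMaximal J, fun a ha => hFJ ha⟩

instance compactSpace : CompactSpace (LatUltra L) := by
  refine ⟨isCompact_iff_ultrafilter_le_nhds.2 fun 𝒰 _ => ?_⟩
  set F := {a : L | {u : LatUltra L | a ∈ u.sets} ∈ 𝒰}
  have hF : IsPFilter F := by
    refine IsPFilter.of_def ⟨⊤, ?_⟩ (fun a ha b hb => ⟨a ⊓ b, ?_, inf_le_left, inf_le_right⟩)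
      (fun hab ha => 𝒰.mem_of_superset ha fun u hu => u.superset_mem _ hu _ hab)
    · show {u : LatUltra L | ⊤ ∈ u.sets} ∈ 𝒰
      simp only [LatUltra.top_mem, ofPred_true]
      exact Filter.univ_mem
    · show {u : LatUltra L | a ⊓ b ∈ u.sets} ∈ 𝒰
      simp only [inf_mem_iff, ofPred_and]
      exact 𝒰.inter_mem ha hb
  have hbot : ⊥ ∉ F := by
    show {u : LatUltra L | ⊥ ∈ u.sets} ∉ 𝒰
    simp only [LatUltra.bot_notMem, ofPred_false, Ultrafilter.empty_notMem, not_false_eq_true]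
  obtain ⟨u, hu⟩ := exists_superset_of_isPFilter hF hbot
  refine ⟨u, mem_univ u, ?_⟩
  rw [nhds_generateFrom]
  refine le_iInf₂ ?_
  rintro _ ⟨hus, a, rfl⟩
  exact Filter.le_principal_iff.2 (𝒰.compl_mem_iff_notMem.2 fun ha => hus (hu ha))

instance [Countable L] : SecondCountableTopology (LatUltra L) :=
  ⟨⟨_, (countable_range fun a : L => {u : LatUltra L | a ∈ u.sets}ᶜ).mono
    (by rintro _ ⟨a, rfl⟩; exact ⟨a, rfl⟩), rfl⟩⟩

end Lattice

section DistribLattice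

variable [DistribLattice L] [BoundedOrder L]

theorem mem_or_mem_of_sup_mem (u : LatUltra L) {a b : L} (hab : a ⊔ b ∈ u.sets) :
    a ∈ u.sets ∨ b ∈ u.sets := by
  by_contra! h
  obtain ⟨c, hc, hac⟩ := u.ultra a h.1
  obtain ⟨d, hd, hbd⟩ := u.ultra b h.2
  have : (a ⊔ b) ⊓ (c ⊓ d) = ⊥ := by
    rw [inf_sup_right, eq_bot_iff]
    exact sup_le (hac ▸ inf_le_inf_left a inf_le_left) (hbd ▸ inf_le_inf_left b inf_le_right)
  exact u.bot_notMem (this ▸ u.inf_mem _ hab _ (u.inf_mem c hc d hd))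

theorem disjoint_nhds_of_mem_of_notMem (hnorm : LatNormal L) {u v : LatUltra L} {a : L}
    (hau : a ∈ u.sets) (hav : a ∉ v.sets) : Disjoint (𝓝 u) (𝓝 v) := by
  obtain ⟨b, hbv, hab⟩ := v.ultra a hav
  obtain ⟨c, d, hcd, hca, hdb⟩ := hnorm a b hab
  refine Filter.disjoint_iff.2 ⟨_, (isOpen_compl_setOf_mem c).mem_nhds fun hcu => ?_,
    _, (isOpen_compl_setOf_mem d).mem_nhds fun hdv => ?_, Set.disjoint_left.2 fun w hcw hdw => ?_⟩
  · exact u.bot_notMem (hca ▸ u.inf_mem c hcu a hau)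
  · exact v.bot_notMem (hdb ▸ v.inf_mem d hdv b hbv)
  · exact (w.mem_or_mem_of_sup_mem (hcd ▸ w.top_mem)).elim hcw hdw

theorem t2Space_of_latNormal (hnorm : LatNormal L) : T2Space (LatUltra L) := by
  refine t2Space_iff_disjoint_nhds.2 fun u v huv => ?_
  obtain ⟨a, ha⟩ := not_forall.1 fun h => huv (sets_injective (Set.ext h))
  by_cases hau : a ∈ u.sets
  · exact disjoint_nhds_of_mem_of_notMem hnorm hau fun hav => ha (iff_of_true hau hav)
  · exact (disjoint_nhds_of_mem_of_notMem hnorm ((not_iff.1 ha).1 hau) hau).symm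

end DistribLattice

end LatUltra

theorem wallman_countable_compact_metrizable_general (L : Type u) [DistribLattice L]
    [BoundedOrder L] [Countable L] (hnorm : LatNormal L) :
    CompactSpace (LatUltra L) ∧ TopologicalSpace.MetrizableSpace (LatUltra L) := by
  have := LatUltra.t2Space_of_latNormal hnorm
  exact ⟨inferInstance, inferInstance⟩

/-- The Wallman space of a countable normal (bounded, distributive,
separative) lattice is compact and metrizable. -/
theorem wallman_countable_compact_metrizable (L : Type u) [DistribLattice L]
    [BoundedOrder L] [Countable L] (hsep : LatSeparative L) (hnorm : LatNormal L) :
    CompactSpace (LatUltra L) ∧ TopologicalSpace.MetrizableSpace (LatUltra L) :=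
  wallman_countable_compact_metrizable_general L hnorm
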